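/- Let (X,d) be an unbounded metric space, p∈X, let r̃ be a scaling sequence, and let X̃_{∞,r̃} be a maximal self-stable subset of Seq(X,r̃). If ỹ=(y_n) is a sequence in X with lim_n d(y_n,p)=∞ and ỹ is mutually stable with every x̃∈X̃_{∞,r̃}, then ỹ∈X̃_{∞,r̃}. -/

import Mathlib

open Filter Topology
open scoped Classical

/-- An unbounded metric space. -/
def UnboundedSpace (X : Type*) [MetricSpace X] : Prop :=
  ¬ Bornology.IsBounded (Set.univ : Set X)

/-- A scaling sequence: positive reals tending to infinity. -/
def ScalingSeq (r : ℕ → ℝ) : Prop :=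
  (∀ n, 0 < r n) ∧ Filter.Tendsto r Filter.atTop Filter.atTop

/-- Two sequences are mutually stable w.r.t. `r` if `d(x_n, y_n)/r_n` has a finite limit. -/
def MutuallyStable {X : Type*} [MetricSpace X] (r : ℕ → ℝ) (x y : ℕ → X) : Prop :=
  ∃ L : ℝ, Filter.Tendsto (fun n => dist (x n) (y n) / r n) Filter.atTop (nhds L)

/-- `Seq(X, r̃)`: sequences going to infinity such that `d(x_n, p)/r_n` has a finite limit. -/
def SeqInf {X : Type*} [MetricSpace X] (r : ℕ → ℝ) (p : X) : Set (ℕ → X) :=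
  {x | Filter.Tendsto (fun n => dist (x n) p) Filter.atTop Filter.atTop ∧
    ∃ L : ℝ, Filter.Tendsto (fun n => dist (x n) p / r n) Filter.atTop (nhds L)}

/-- The relation `x̃ ≡ ỹ`, i.e. `d(x_n, y_n)/r_n → 0`. -/
def EquivSeq {X : Type*} [MetricSpace X] (r : ℕ → ℝ) (x y : ℕ → X) : Prop :=
  Filter.Tendsto (fun n => dist (x n) (y n) / r n) Filter.atTop (nhds 0)

/-- The `≡`-equivalence class of `x` inside `Seq(X, r̃)`. -/
def classOf {X : Type*} [MetricSpace X] (r : ℕ → ℝ) (p : X) (x : ℕ → X) : Set (ℕ → X) :=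
  {y | y ∈ SeqInf r p ∧ EquivSeq r x y}

/-- The vertex set of the cluster graph `G_{X, r̃}`: all `≡`-classes of `Seq(X, r̃)`. -/
def VertexSet {X : Type*} [MetricSpace X] (r : ℕ → ℝ) (p : X) : Set (Set (ℕ → X)) :=
  {v | ∃ x ∈ SeqInf r p, v = classOf r p x}

/-- Adjacency in the cluster graph `G_{X, r̃}`: distinct classes whose representatives
are mutually stable. -/
def AdjacentCl {X : Type*} [MetricSpace X] (r : ℕ → ℝ) (p : X) (u v : Set (ℕ → X)) : Prop :=
  u ∈ VertexSet r p ∧ v ∈ VertexSet r p ∧ u ≠ v ∧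
    ∀ x ∈ u, ∀ y ∈ v, MutuallyStable r x y

/-- The weight `ρ_X` on the cluster graph: for an edge `{u,v}` it is the (unique) limit
`lim d(x_n, y_n)/r_n` for representatives. -/
noncomputable def rhoX {X : Type*} [MetricSpace X] (r : ℕ → ℝ) (u v : Set (ℕ → X)) : ℝ :=
  sSup {L : ℝ | ∃ x ∈ u, ∃ y ∈ v,
    Filter.Tendsto (fun n => dist (x n) (y n) / r n) Filter.atTop (nhds L)}

/-- The root `ν₀ = X̃⁰_{∞,r̃}`: sequences with `d(z_n,p) → ∞` and `d(z_n,p)/r_n → 0`. -/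
def rootClass {X : Type*} [MetricSpace X] (r : ℕ → ℝ) (p : X) : Set (ℕ → X) :=
  {z | Filter.Tendsto (fun n => dist (z n) p) Filter.atTop Filter.atTop ∧
    Filter.Tendsto (fun n => dist (z n) p / r n) Filter.atTop (nhds 0)}

/-- The labeling `ρ⁰` of vertices: `ρ⁰(v) = lim d(x_n,p)/r_n` for `x̃ ∈ v`. -/
noncomputable def rho0 {X : Type*} [MetricSpace X] (r : ℕ → ℝ) (p : X)
    (v : Set (ℕ → X)) : ℝ :=
  sSup {L : ℝ | ∃ x ∈ v, Filter.Tendsto (fun n => dist (x n) p / r n) Filter.atTop (nhds L)}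

/-- A self-stable family: a subset of `Seq(X, r̃)` any two of whose members are
mutually stable. -/
def SelfStable {X : Type*} [MetricSpace X] (r : ℕ → ℝ) (p : X) (F : Set (ℕ → X)) : Prop :=
  F ⊆ SeqInf r p ∧ ∀ x ∈ F, ∀ y ∈ F, MutuallyStable r x y

/-- A maximal self-stable set `X̃_{∞, r̃}`. -/
def MaxSelfStable {X : Type*} [MetricSpace X] (r : ℕ → ℝ) (p : X) (F : Set (ℕ → X)) : Prop :=
  SelfStable r p F ∧ ∀ F', SelfStable r p F' → F ⊆ F' → F = F'

/-- The pretangent space `Ω^X_{∞,r̃}` attached to a maximal self-stable set `F`: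
the set of `≡`-classes of members of `F`. -/
def PretangentCl {X : Type*} [MetricSpace X] (r : ℕ → ℝ) (F : Set (ℕ → X)) :
    Set (Set (ℕ → X)) :=
  {v | ∃ x ∈ F, v = {y | y ∈ F ∧ EquivSeq r x y}}

/-- A clique in the cluster graph `G_{X, r̃}`. -/
def IsCliqueCl {X : Type*} [MetricSpace X] (r : ℕ → ℝ) (p : X)
    (C : Set (Set (ℕ → X))) : Prop :=
  C ⊆ VertexSet r p ∧ ∀ u ∈ C, ∀ v ∈ C, u ≠ v → AdjacentCl r p u v

/-!
A sequence `z` escaping to infinity more slowly than `r̃` (which exists because `X` is unbounded)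
satisfies `d(z_n, p)/r_n → 0`, hence `|d(x_n, z_n) - d(x_n, p)| ≤ d(z_n, p)` makes it mutually
stable with every member of `Seq(X, r̃)`; by maximality `z ∈ X̃_{∞,r̃}`. Stability of `ỹ` with `z`
then shows that `d(y_n, p)/r_n` converges, so `ỹ ∈ Seq(X, r̃)`, and maximality applies once more.
-/

lemma exists_tendsto_atTop_eventually_apply {P : ℕ → ℕ → Prop}
    (h : ∀ k, ∀ᶠ n in atTop, P k n) :
    ∃ m : ℕ → ℕ, Tendsto m atTop atTop ∧ ∀ᶠ n in atTop, P (m n) n := by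
  refine ⟨fun n => Nat.findGreatest (fun k => P k n) n, tendsto_atTop.2 fun k => ?_, ?_⟩
  · filter_upwards [h k, eventually_ge_atTop k] with n hP hk using Nat.le_findGreatest hk hP
  · filter_upwards [h 0] with n hP using
    Nat.findGreatest_spec (P := fun k => P k n) (Nat.zero_le n) hP

section

variable {X : Type*} [MetricSpace X]

lemma UnboundedSpace.exists_lt_dist (hX : UnboundedSpace X) (p : X) (t : ℝ) :
    ∃ x : X, t < dist x p := by
  by_contra! h
  exact hX (Metric.isBounded_closedBall (x := p) (r := t) |>.subset fun x _ => h x)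

lemma rootClass_nonempty (hX : UnboundedSpace X) (p : X) {r : ℕ → ℝ} (hr : ScalingSeq r) :
    (rootClass r p).Nonempty := by
  choose q hq using fun k : ℕ => hX.exists_lt_dist p k
  have hsqrt : Tendsto (fun n => √(r n)) atTop atTop := Real.tendsto_sqrt_atTop.comp hr.2
  obtain ⟨m, hm, hle⟩ := exists_tendsto_atTop_eventually_apply
    (P := fun k n => dist (q k) p ≤ √(r n)) fun k => hsqrt.eventually_ge_atTop _
  refine ⟨q ∘ m, ?_, ?_⟩
  · exact tendsto_atTop_mono (fun n => (hq (m n)).le) (tendsto_natCast_atTop_atTop.comp hm)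
  · refine squeeze_zero' (Eventually.of_forall fun n => div_nonneg dist_nonneg (hr.1 n).le)
      (hle.mono fun n hn => ?_) hsqrt.inv_tendsto_atTop
    calc dist (q (m n)) p / r n ≤ √(r n) / r n := by gcongr; exact (hr.1 n).le
      _ = (√(r n))⁻¹ := by rw [Real.sqrt_div_self', one_div]

lemma tendsto_dist_div_iff_of_tendsto_dist_div_zero {r : ℕ → ℝ} (hr : ∀ n, 0 < r n)
    {p : X} {x z : ℕ → X} (hz : Tendsto (fun n => dist (z n) p / r n) atTop (𝓝 0)) {L : ℝ} :
    Tendsto (fun n => dist (x n) (z n) / r n) atTop (𝓝 L) ↔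
      Tendsto (fun n => dist (x n) p / r n) atTop (𝓝 L) := by
  refine tendsto_iff_of_dist <| squeeze_zero (fun _ => dist_nonneg) (fun n => ?_) hz
  rw [Real.dist_eq, ← sub_div, abs_div, abs_of_pos (hr n), dist_comm (x n) (z n),
    dist_comm (x n) p]
  exact div_le_div_of_nonneg_right (abs_dist_sub_le (z n) p (x n)) (hr n).le

lemma MutuallyStable.symm {r : ℕ → ℝ} {x y : ℕ → X} (h : MutuallyStable r x y) :
    MutuallyStable r y x := by
  simpa only [MutuallyStable, dist_comm] using h

lemma MutuallyStable.refl (r : ℕ → ℝ) (x : ℕ → X) : MutuallyStable r x x :=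
  ⟨0, by simpa only [dist_self, zero_div] using tendsto_const_nhds⟩

lemma SelfStable.insert {r : ℕ → ℝ} {p : X} {F : Set (ℕ → X)} (hF : SelfStable r p F)
    {y : ℕ → X} (hy : y ∈ SeqInf r p) (hst : ∀ x ∈ F, MutuallyStable r x y) :
    SelfStable r p (insert y F) := by
  refine ⟨Set.insert_subset hy hF.1, ?_⟩
  rintro a (rfl | ha) b (rfl | hb)
  · exact .refl r _
  · exact (hst b hb).symm
  · exact hst a ha
  · exact hF.2 a ha b hb

lemma MaxSelfStable.mem_of_forall_mutuallyStable {r : ℕ → ℝ} {p : X} {F : Set (ℕ → X)}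
    (hF : MaxSelfStable r p F) {y : ℕ → X} (hy : y ∈ SeqInf r p)
    (hst : ∀ x ∈ F, MutuallyStable r x y) : y ∈ F := by
  rw [hF.2 _ (hF.1.insert hy hst) (Set.subset_insert y F)]
  exact Set.mem_insert y F

end

/-- Lemma l1.2.4. If `ỹ` tends to infinity and is mutually stable
with every member of a maximal self-stable set `X̃_{∞,r̃}`, then `ỹ ∈ X̃_{∞,r̃}`. -/
theorem mem_maxSelfStable_of_mutuallyStable {X : Type*} [MetricSpace X]
    (hX : UnboundedSpace X) (p : X) (r : ℕ → ℝ) (hr : ScalingSeq r)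
    (F : Set (ℕ → X)) (hF : MaxSelfStable r p F) (y : ℕ → X)
    (hy : Filter.Tendsto (fun n => dist (y n) p) Filter.atTop Filter.atTop)
    (hst : ∀ x ∈ F, MutuallyStable r x y) :
    y ∈ F := by
  obtain ⟨z, hz_far, hz_zero⟩ := rootClass_nonempty hX p hr
  have hzF : z ∈ F := hF.mem_of_forall_mutuallyStable ⟨hz_far, 0, hz_zero⟩ fun x hx => by
    obtain ⟨L, hL⟩ := (hF.1.1 hx).2
    exact ⟨L, (tendsto_dist_div_iff_of_tendsto_dist_div_zero hr.1 hz_zero).2 hL⟩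
  obtain ⟨L, hL⟩ := (hst z hzF).symm
  exact hF.mem_of_forall_mutuallyStable
    ⟨hy, L, (tendsto_dist_div_iff_of_tendsto_dist_div_zero hr.1 hz_zero).1 hL⟩ hst
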